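/- Let f : M_{d_L×d_0}(ℝ) → ℝ be differentiable and (Ŵ_1,...,Ŵ_L) a local minimizer of F(W_1,...,W_L) = f(W_L ··· W_1). If the product Ŵ_{L-1,-} = Ŵ_{L-1} ··· Ŵ_1 has trivial kernel, then ∇f(Ŵ_L ··· Ŵ_1) = 0. -/

import Mathlib

open Matrix

/-- Frobenius norm of a real matrix. -/
noncomputable def frob {m n : ℕ} (A : Matrix (Fin m) (Fin n) ℝ) : ℝ :=
  Real.sqrt (∑ i, ∑ j, (A i j)^2)

/-- `prodUpTo d k W = W (k-1) * ⋯ * W 1 * W 0`, the product of the first `k` layer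
matrices: in the paper's 1-indexed notation this is the truncated product
`W_{k,-} = W_k ⋯ W_1`, and `prodUpTo d L W = W_L ⋯ W_1` is the full network product. -/
noncomputable def prodUpTo (d : ℕ → ℕ) : (k : ℕ) →
    ((j : ℕ) → Matrix (Fin (d (j+1))) (Fin (d j)) ℝ) → Matrix (Fin (d k)) (Fin (d 0)) ℝ
  | 0, _ => 1
  | k+1, W => W k * prodUpTo d k W

/-- `G` is the gradient of `f` at `A`:  `f (A+H) = f A + ⟨G, H⟩_fro + o(‖H‖_fro)`,
where `⟨G, H⟩_fro = Tr (Gᵀ H)` is the Frobenius inner product. -/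
def HasGradAt {m n : ℕ} (f : Matrix (Fin m) (Fin n) ℝ → ℝ)
    (A G : Matrix (Fin m) (Fin n) ℝ) : Prop :=
  ∀ ε > (0:ℝ), ∃ δ > (0:ℝ), ∀ H : Matrix (Fin m) (Fin n) ℝ,
    frob H ≤ δ → |f (A + H) - f A - (Gᵀ * H).trace| ≤ ε * frob H

/-!
Perturbing only the last layer, `W_L ↦ Ŵ_L + t V`, moves the network product along the line
`A + t V P` with `A = Ŵ_L ⋯ Ŵ_1` and `P = Ŵ_{L-1} ⋯ Ŵ_1`. Local minimality makes the derivative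
`tr (Gᵀ V P) = tr (P Gᵀ V)` of this line vanish for every `V`, so `P Gᵀ = 0`, and injectivity of
`P` gives `G = 0`.
-/

lemma frob_nonneg {m n : ℕ} (A : Matrix (Fin m) (Fin n) ℝ) : 0 ≤ frob A :=
  Real.sqrt_nonneg _

lemma frob_zero {m n : ℕ} : frob (0 : Matrix (Fin m) (Fin n) ℝ) = 0 := by
  simp [frob]

lemma frob_smul {m n : ℕ} (t : ℝ) (A : Matrix (Fin m) (Fin n) ℝ) :
    frob (t • A) = |t| * frob A := by
  have h : ∑ i, ∑ j, ((t • A) i j) ^ 2 = t ^ 2 * ∑ i, ∑ j, (A i j) ^ 2 := by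
    simp [Finset.mul_sum, mul_pow]
  rw [frob, h, Real.sqrt_mul (sq_nonneg t), Real.sqrt_sq_eq_abs, frob]

lemma HasGradAt.hasDerivAt_line {m n : ℕ} {f : Matrix (Fin m) (Fin n) ℝ → ℝ}
    {A G : Matrix (Fin m) (Fin n) ℝ} (hf : HasGradAt f A G) (H : Matrix (Fin m) (Fin n) ℝ) :
    HasDerivAt (fun t : ℝ => f (A + t • H)) (Gᵀ * H).trace 0 := by
  rw [hasDerivAt_iff_isLittleO_nhds_zero, Asymptotics.isLittleO_iff]
  intro c hc
  have hH : 0 < frob H + 1 := by linarith [frob_nonneg H]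
  obtain ⟨δ, hδ, hgrad⟩ := hf (c / (frob H + 1)) (by positivity)
  filter_upwards [Metric.ball_mem_nhds (0 : ℝ) (show 0 < δ / (frob H + 1) by positivity)]
    with t ht
  rw [Metric.mem_ball, dist_zero_right, Real.norm_eq_abs, lt_div_iff₀ hH] at ht
  have hstep : frob (t • H) ≤ δ := by
    rw [frob_smul]; nlinarith [abs_nonneg t, frob_nonneg H]
  have hlin := hgrad (t • H) hstep
  rw [Matrix.mul_smul, trace_smul, smul_eq_mul, frob_smul] at hlin
  simp only [zero_add, zero_smul, add_zero, smul_eq_mul, Real.norm_eq_abs]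
  calc _ ≤ c / (frob H + 1) * (|t| * frob H) := hlin
    _ ≤ c * |t| := by
      rw [div_mul_eq_mul_div, div_le_iff₀ hH]; nlinarith [abs_nonneg t]

lemma prodUpTo_congr (d : ℕ → ℕ) {k : ℕ}
    {W W' : (j : ℕ) → Matrix (Fin (d (j+1))) (Fin (d j)) ℝ}
    (h : ∀ j < k, W j = W' j) : prodUpTo d k W = prodUpTo d k W' := by
  induction k with
  | zero => rfl
  | succ k ih =>
    rw [prodUpTo, prodUpTo, h k k.lt_succ_self, ih fun j hj => h j (hj.trans k.lt_succ_self)]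

lemma prodUpTo_update_last (d : ℕ → ℕ) (k : ℕ)
    (W : (j : ℕ) → Matrix (Fin (d (j+1))) (Fin (d j)) ℝ)
    (V : Matrix (Fin (d (k+1))) (Fin (d k)) ℝ) :
    prodUpTo d (k+1) (Function.update W k (W k + V)) =
      prodUpTo d (k+1) W + V * prodUpTo d k W := by
  have hlow : prodUpTo d k (Function.update W k (W k + V)) = prodUpTo d k W :=
    prodUpTo_congr d fun j hj => Function.update_of_ne hj.ne _ _
  rw [prodUpTo, prodUpTo, hlow, Function.update_self, Matrix.add_mul]

lemma isLocalMin_perturb_lastLayer {d : ℕ → ℕ} {k : ℕ}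
    {f : Matrix (Fin (d (k+1))) (Fin (d 0)) ℝ → ℝ}
    {What : (j : ℕ) → Matrix (Fin (d (j+1))) (Fin (d j)) ℝ}
    (hmin : ∃ ε > (0:ℝ), ∀ W, (∀ j < k + 1, frob (W j - What j) ≤ ε) →
      f (prodUpTo d (k+1) W) ≥ f (prodUpTo d (k+1) What))
    (V : Matrix (Fin (d (k+1))) (Fin (d k)) ℝ) :
    IsLocalMin (fun t : ℝ => f (prodUpTo d (k+1) What + t • (V * prodUpTo d k What))) 0 := by
  obtain ⟨ε, hε, hmin⟩ := hmin
  have hV : 0 < frob V + 1 := by linarith [frob_nonneg V]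
  filter_upwards [Metric.ball_mem_nhds (0 : ℝ) (show 0 < ε / (frob V + 1) by positivity)]
    with t ht
  rw [Metric.mem_ball, dist_zero_right, Real.norm_eq_abs, lt_div_iff₀ hV] at ht
  have hclose : ∀ j < k + 1, frob (Function.update What k (What k + t • V) j - What j) ≤ ε := by
    intro j _
    rcases eq_or_ne j k with rfl | hjk
    · rw [Function.update_self, add_sub_cancel_left, frob_smul]
      nlinarith [abs_nonneg t, frob_nonneg V]
    · rw [Function.update_of_ne hjk, sub_self, frob_zero]
      exact hε.le
  simpa [prodUpTo_update_last, Matrix.smul_mul] using hmin _ hclose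

lemma Matrix.mul_transpose_eq_zero_of_forall_trace {l m n R : Type*} [Fintype l] [Fintype m]
    [Fintype n] [CommSemiring R] {G : Matrix m n R} {P : Matrix l n R}
    (h : ∀ V : Matrix m l R, (Gᵀ * (V * P)).trace = 0) : P * Gᵀ = 0 :=
  ext_iff_trace_mul_right.mpr fun V => by
    rw [Matrix.zero_mul, trace_zero, ← h V, ← Matrix.mul_assoc, trace_mul_cycle Gᵀ]

lemma Matrix.eq_zero_of_mul_eq_zero_of_mulVec_injective {l m n R : Type*} [Fintype m]
    [NonUnitalNonAssocSemiring R] {P : Matrix l m R} {X : Matrix m n R} (hP : Function.Injective P.mulVec) (h : P * X = 0) : X = 0 :=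
  ext_col fun j => hP <| (congr_arg (col · j) h).trans (mulVec_zero P).symm

theorem stmt15_general (L : ℕ) (hL : 1 ≤ L) (d : ℕ → ℕ)
    (f : Matrix (Fin (d L)) (Fin (d 0)) ℝ → ℝ)
    (G : Matrix (Fin (d L)) (Fin (d 0)) ℝ)
    (What : (j : ℕ) → Matrix (Fin (d (j+1))) (Fin (d j)) ℝ)
    (hf : HasGradAt f (prodUpTo d L What) G)
    (hmin : ∃ ε > (0:ℝ), ∀ W, (∀ j < L, frob (W j - What j) ≤ ε) →
      f (prodUpTo d L W) ≥ f (prodUpTo d L What))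
    (hker : LinearMap.ker (Matrix.mulVecLin (prodUpTo d (L-1) What)) = ⊥) :
    G = 0 := by
  obtain ⟨K, rfl⟩ : ∃ K, L = K + 1 := ⟨L - 1, (Nat.sub_add_cancel hL).symm⟩
  have hcrit : ∀ V : Matrix (Fin (d (K+1))) (Fin (d K)) ℝ,
      (Gᵀ * (V * prodUpTo d K What)).trace = 0 := fun V =>
    (isLocalMin_perturb_lastLayer hmin V).hasDerivAt_eq_zero (hf.hasDerivAt_line _)
  have hinj : Function.Injective (prodUpTo d K What).mulVec := LinearMap.ker_eq_bot.mp hker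
  exact transpose_eq_zero.mp <| Matrix.eq_zero_of_mul_eq_zero_of_mulVec_injective hinj
    (Matrix.mul_transpose_eq_zero_of_forall_trace hcrit)

/-- If `f` is differentiable, `(Ŵ_1,...,Ŵ_L)` is a local minimizer of
`F = f(W_L ... W_1)`, and the product `Ŵ_{L-1,-} = Ŵ_{L-1} ... Ŵ_1` has trivial kernel,
then `∇f(Ŵ_L ... Ŵ_1) = 0`. -/
theorem stmt15 (L : ℕ) (hL : 1 ≤ L) (d : ℕ → ℕ)
    (f : Matrix (Fin (d L)) (Fin (d 0)) ℝ → ℝ)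
    (hdiff : ∀ A, ∃ G', HasGradAt f A G')
    (G : Matrix (Fin (d L)) (Fin (d 0)) ℝ)
    (What : (j : ℕ) → Matrix (Fin (d (j+1))) (Fin (d j)) ℝ)
    (hf : HasGradAt f (prodUpTo d L What) G)
    (hmin : ∃ ε > (0:ℝ), ∀ W, (∀ j < L, frob (W j - What j) ≤ ε) →
      f (prodUpTo d L W) ≥ f (prodUpTo d L What))
    (hker : LinearMap.ker (Matrix.mulVecLin (prodUpTo d (L-1) What)) = ⊥) :
    G = 0 :=
  stmt15_general L hL d f G What hf hmin hker
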